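/- arXiv:2302.00766 — 4 statements merged into one kernel-verified Lean document; each statement's English description precedes it below -/
import Mathlib

section
/- Let b, b' : ℝ^d → ℝ^d be C¹ vector fields and Σ, Σ' : ℝ^d → ℝ^{d×d} be C² matrix-valued maps, and let p' : ℝ^d → ℝ be a C² everywhere-positive function. Define the Fokker–Planck operators A u = −∑_i ∂_{x_i}(b_i u) + (1/2) ∑_{i,j} ∂²_{x_i x_j}(Σ_{ij} u) and A' u likewise with b', Σ'. Set h_i = b_i − (1/2) ∑_j ∂_{x_j} Σ_{ij}, h'_i = b'_i − (1/2) ∑_j ∂_{x_j} Σ'_{ij}, and Φ = (1/2)(Σ' − Σ)∇p'/p' − (h' − h). Then for every x ∈ ℝ^d, (A' p')(x) = (A p')(x) + ∇·(Φ p')(x), where ∇·G = ∑_i ∂_{x_i} G_i denotes the divergence of a vector field G. -/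
noncomputable section

open MeasureTheory

/-- `ℝ^d` with the Euclidean structure. -/
abbrev Euc (d : ℕ) := EuclideanSpace ℝ (Fin d)

/-- Partial derivative `∂_{x_i} f` of a scalar function on `ℝ^d`. -/
def pd {d : ℕ} (i : Fin d) (f : Euc d → ℝ) (x : Euc d) : ℝ :=
  fderiv ℝ f x (EuclideanSpace.single i 1)

/-- Divergence `∇·G = ∑ i ∂_{x_i} G_i` of a vector field on `ℝ^d`. -/
def diverg {d : ℕ} (G : Euc d → Euc d) (x : Euc d) : ℝ :=
  ∑ i, pd i (fun y => G y i) x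

/-- The Fokker–Planck operator
`A u = −∑_i ∂_{x_i}(b_i u) + (1/2) ∑_{i,j} ∂²_{x_i x_j}(Σ_{ij} u)`. -/
def FPop {d : ℕ} (b : Euc d → Euc d) (S : Euc d → Matrix (Fin d) (Fin d) ℝ)
    (u : Euc d → ℝ) (x : Euc d) : ℝ :=
  -(∑ i, pd i (fun y => b y i * u y) x)
    + (1 / 2) * ∑ i, ∑ j, pd i (fun y => pd j (fun z => S z i j * u z) y) x

/-- `h_i = b_i − (1/2) ∑_j ∂_{x_j} Σ_{ij}`. -/
def hVec {d : ℕ} (b : Euc d → Euc d) (S : Euc d → Matrix (Fin d) (Fin d) ℝ)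
    (x : Euc d) : Euc d :=
  WithLp.toLp 2 fun i => b x i - (1 / 2) * ∑ j, pd j (fun y => S y i j) x

/-- `Φ = (1/2)(Σ' − Σ)∇p'/p' − (h' − h)`. -/
def PhiVec {d : ℕ} (b b' : Euc d → Euc d)
    (S S' : Euc d → Matrix (Fin d) (Fin d) ℝ) (p' : Euc d → ℝ) (x : Euc d) : Euc d :=
  WithLp.toLp 2 fun i =>
    (1 / 2) * (∑ j, (S' x i j - S x i j) * pd j p' x) / p' x
      - (hVec b' S' x i - hVec b S x i)

/-!
Write the Fokker–Planck operator in conservation form `A u = ∇·J(u)` with the probability flux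
`J_i(u) = -b_i u + (1/2) ∑_j ∂_j(Σ_{ij} u)`. Expanding `∂_j(Σ_{ij} p') = Σ_{ij} ∂_j p' + p' ∂_j Σ_{ij}`
shows `p' Φ = J'(p') - J(p')` pointwise (this is where `p' ≠ 0` enters), so the identity is the
linearity of the divergence.
-/

open Finset

section PartialDerivative

variable {d : ℕ} {f g : Euc d → ℝ} {x : Euc d}

lemma pd_add (i : Fin d) (hf : DifferentiableAt ℝ f x) (hg : DifferentiableAt ℝ g x) :
    pd i (fun y => f y + g y) x = pd i f x + pd i g x := by
  simp [pd, fderiv_fun_add hf hg]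

lemma pd_sub (i : Fin d) (hf : DifferentiableAt ℝ f x) (hg : DifferentiableAt ℝ g x) :
    pd i (fun y => f y - g y) x = pd i f x - pd i g x := by
  simp [pd, fderiv_fun_sub hf hg]

lemma pd_neg (i : Fin d) : pd i (fun y => -f y) x = -pd i f x := by
  simp [pd, fderiv_fun_neg]

lemma pd_mul (i : Fin d) (hf : DifferentiableAt ℝ f x) (hg : DifferentiableAt ℝ g x) :
    pd i (fun y => f y * g y) x = f x * pd i g x + g x * pd i f x := by
  simp [pd, fderiv_fun_mul hf hg]

lemma pd_const_mul (i : Fin d) (c : ℝ) (hf : DifferentiableAt ℝ f x) :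
    pd i (fun y => c * f y) x = c * pd i f x := by
  simp [pd, fderiv_const_mul hf c]

lemma pd_sum {ι : Type*} (s : Finset ι) {F : ι → Euc d → ℝ} (i : Fin d)
    (hF : ∀ j ∈ s, DifferentiableAt ℝ (F j) x) :
    pd i (fun y => ∑ j ∈ s, F j y) x = ∑ j ∈ s, pd i (F j) x := by
  simp [pd, fderiv_fun_sum hF]

lemma ContDiff.pd {n : WithTop ℕ∞} (hf : ContDiff ℝ (n + 1) f) (i : Fin d) :
    ContDiff ℝ n (pd i f) :=
  (hf.fderiv_right le_rfl).clm_apply contDiff_const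

lemma diverg_sub {F G : Euc d → Euc d}
    (hF : ∀ i, DifferentiableAt ℝ (fun y => F y i) x)
    (hG : ∀ i, DifferentiableAt ℝ (fun y => G y i) x) :
    diverg (fun y => F y - G y) x = diverg F x - diverg G x := by
  simp only [diverg, PiLp.sub_apply, pd_sub _ (hF _) (hG _), sum_sub_distrib]

end PartialDerivative

section Flux

variable {d : ℕ} (b : Euc d → Euc d) (S : Euc d → Matrix (Fin d) (Fin d) ℝ) (u : Euc d → ℝ)

def fpFlux (y : Euc d) : Euc d :=
  WithLp.toLp 2 fun i => -(b y i * u y) + (1 / 2) * ∑ j, pd j (fun z => S z i j * u z) y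

variable {b S u}

lemma differentiable_fpFlux_terms (hb : ∀ i, ContDiff ℝ 1 fun x => b x i)
    (hS : ∀ i j, ContDiff ℝ 2 fun x => S x i j) (hu : ContDiff ℝ 2 u) :
    (∀ i, Differentiable ℝ fun y => b y i * u y) ∧
      ∀ i j, Differentiable ℝ (pd j fun z => S z i j * u z) :=
  ⟨fun i => ((hb i).differentiable one_ne_zero).mul (hu.differentiable two_ne_zero),
    fun i j => (((hS i j).mul hu).pd j).differentiable one_ne_zero⟩

section Pointwise

variable {x : Euc d} (hbu : ∀ i, DifferentiableAt ℝ (fun y => b y i * u y) x)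
  (hSu : ∀ i j, DifferentiableAt ℝ (pd j fun z => S z i j * u z) x)
include hbu hSu

lemma differentiableAt_fpFlux_apply (i : Fin d) :
    DifferentiableAt ℝ (fun y => fpFlux b S u y i) x :=
  (hbu i).fun_neg.add ((DifferentiableAt.fun_sum fun j _ => hSu i j).const_mul _)

lemma FPop_eq_diverg_fpFlux : FPop b S u x = diverg (fpFlux b S u) x := by
  have hsum : ∀ i, DifferentiableAt ℝ (fun y => ∑ j, pd j (fun z => S z i j * u z) y) x :=
    fun i => DifferentiableAt.fun_sum fun j _ => hSu i j
  have hcomp : ∀ i, pd i (fun y => fpFlux b S u y i) x =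
      -pd i (fun y => b y i * u y) x + 1 / 2 * ∑ j, pd i (pd j fun z => S z i j * u z) x := by
    intro i
    simp only [fpFlux, PiLp.toLp_apply]
    rw [pd_add i (hbu i).fun_neg ((hsum i).const_mul _), pd_neg, pd_const_mul i _ (hsum i),
      pd_sum _ i fun j _ => hSu i j]
  simp only [FPop, diverg, hcomp, sum_add_distrib, sum_neg_distrib, mul_sum]

end Pointwise

lemma smul_PhiVec_eq_fpFlux_sub {b' : Euc d → Euc d} {S' : Euc d → Matrix (Fin d) (Fin d) ℝ}
    {p' : Euc d → ℝ} {y : Euc d}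
    (hS : ∀ i j, DifferentiableAt ℝ (fun z => S z i j) y)
    (hS' : ∀ i j, DifferentiableAt ℝ (fun z => S' z i j) y)
    (hp' : DifferentiableAt ℝ p' y) (hp'y : p' y ≠ 0) :
    p' y • PhiVec b b' S S' p' y = fpFlux b' S' p' y - fpFlux b S p' y := by
  ext i
  simp only [PiLp.smul_apply, PiLp.sub_apply, smul_eq_mul, PhiVec, hVec, fpFlux,
    pd_mul _ (hS _ _) hp', pd_mul _ (hS' _ _) hp', sum_add_distrib, ← mul_sum, sub_mul,
    sum_sub_distrib]
  field_simp
  ring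

end Flux

/-- Fokker–Planck operator comparison identity (Lemma 2.1):
`A' p' = A p' + ∇·(Φ p')`. -/
theorem fokker_planck_operator_comparison {d : ℕ}
    (b b' : Euc d → Euc d)
    (hb : ∀ i, ContDiff ℝ 1 fun x => b x i)
    (hb' : ∀ i, ContDiff ℝ 1 fun x => b' x i)
    (S S' : Euc d → Matrix (Fin d) (Fin d) ℝ)
    (hS : ∀ i j, ContDiff ℝ 2 fun x => S x i j)
    (hS' : ∀ i j, ContDiff ℝ 2 fun x => S' x i j)
    (p' : Euc d → ℝ) (hp' : ContDiff ℝ 2 p') (hp'pos : ∀ x, 0 < p' x) :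
    ∀ x : Euc d,
      FPop b' S' p' x =
        FPop b S p' x + diverg (fun y => p' y • PhiVec b b' S S' p' y) x := by
  intro x
  obtain ⟨hbp, hSp⟩ := differentiable_fpFlux_terms hb hS hp'
  obtain ⟨hb'p, hS'p⟩ := differentiable_fpFlux_terms hb' hS' hp'
  have hflux : (fun y => p' y • PhiVec b b' S S' p' y) =
      fun y => fpFlux b' S' p' y - fpFlux b S p' y := by
    funext y
    exact smul_PhiVec_eq_fpFlux_sub (fun i j => (hS i j).differentiable two_ne_zero y)
      (fun i j => (hS' i j).differentiable two_ne_zero y) (hp'.differentiable two_ne_zero y)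
      (hp'pos y).ne'
  have hJ := differentiableAt_fpFlux_apply (fun i => hbp i x) (fun i j => hSp i j x)
  have hJ' := differentiableAt_fpFlux_apply (fun i => hb'p i x) (fun i j => hS'p i j x)
  rw [hflux, diverg_sub hJ' hJ, FPop_eq_diverg_fpFlux (fun i => hbp i x) (fun i j => hSp i j x),
    FPop_eq_diverg_fpFlux (fun i => hb'p i x) (fun i j => hS'p i j x)]
  ring
end
end

section
/- Let σ, σ', κ, κ', L, L' > 0 and let f, f' : ℝ^d → ℝ be continuously differentiable with ∇f L-Lipschitz, ∇f' L'-Lipschitz, f κ-strongly convex with minimizer x*, and f' κ'-strongly convex with minimizer x'* (so ∇f(x*) = 0 and ∇f'(x'*) = 0). Suppose e^{−f/(2σ²)} and e^{−f'/(2σ'²)} are Lebesgue-integrable and define the Gibbs densities p_∞ = Z^{−1} e^{−f/(2σ²)} and p'_∞ = (Z')^{−1} e^{−f'/(2σ'²)} with normalizing constants Z, Z'. Set M = σ²/σ'². Assume: (a) the measure p'_∞(x)dx satisfies the C'-log-Sobolev inequality with C' = 4/(σ'² κ'); (b) ∫ ‖x − x*‖² p_∞(x) dx ≤ σ²/(2κ);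 (c) g := √(p_∞/p'_∞) satisfies ∫ ‖∇g‖² p'_∞ dx < ∞ and p_∞ log(p_∞/p'_∞) is integrable. Then KL(p_∞‖p'_∞) ≤ (1/(4 σ⁴ σ'² κ')) · [(L² + 2M² L'²)(σ²/κ) + 4 M² L'² ‖x* − x'*‖²]. -/
noncomputable section

open MeasureTheory
open scoped RealInnerProductSpace
open scoped ENNReal NNReal

/-- The Kullback–Leibler divergence `KL(p‖p') = ∫ p log(p/p')` (w.r.t. Lebesgue measure). -/
def KLdiv {d : ℕ} (p p' : Euc d → ℝ) : ℝ :=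
  ∫ x, p x * Real.log (p x / p' x)

/-- `ν` satisfies the `C`-log-Sobolev inequality. -/
def SatisfiesLSI {d : ℕ} (ν : Measure (Euc d)) (C : ℝ) : Prop :=
  ∀ g : Euc d → ℝ, ContDiff ℝ 1 g →
    Integrable (fun x => g x ^ 2) ν →
    Integrable (fun x => g x ^ 2 * Real.log (g x ^ 2)) ν →
    Integrable (fun x => ‖gradient g x‖ ^ 2) ν →
    (∫ x, g x ^ 2 * Real.log (g x ^ 2) ∂ν)
        - (∫ x, g x ^ 2 ∂ν) * Real.log (∫ x, g x ^ 2 ∂ν)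
      ≤ C * ∫ x, ‖gradient g x‖ ^ 2 ∂ν

/-! ### Auxiliary lemmas -/

lemma gauss_int {d : ℕ} {b : ℝ} (hb : 0 < b) :
    Integrable (fun v : Euc d => Real.exp (-b * ‖v‖ ^ 2)) volume := by
  have h := (GaussianFourier.integrable_cexp_neg_mul_sq_norm_add_of_euclideanSpace
    (ι := Fin d) (b := (b:ℂ)) (by simpa using hb) 0 0).norm
  refine h.congr (Filter.Eventually.of_forall fun v => ?_)
  simp only [Complex.norm_exp]
  norm_num
  left
  norm_cast

lemma gauss_mom {d : ℕ} {b : ℝ} (hb : 0 < b) :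
    Integrable (fun v : Euc d => ‖v‖ ^ 2 * Real.exp (-b * ‖v‖ ^ 2)) volume := by
  have hhalf : 0 < b / 2 := by linarith
  refine ((gauss_int hhalf).const_mul (2 / b)).mono' ?_ ?_
  · exact ((continuous_norm.pow 2).mul
      ((continuous_const.mul (continuous_norm.pow 2)).rexp)).aestronglyMeasurable
  · refine Filter.Eventually.of_forall fun v => ?_
    have h1 : (0:ℝ) ≤ ‖v‖ ^ 2 := sq_nonneg _
    have h2 : b / 2 * ‖v‖ ^ 2 + 1 ≤ Real.exp (b / 2 * ‖v‖ ^ 2) :=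
      Real.add_one_le_exp _
    rw [Real.norm_eq_abs, abs_of_nonneg (by positivity)]
    have key : ‖v‖ ^ 2 ≤ 2 / b * Real.exp (b / 2 * ‖v‖ ^ 2) := by
      rw [div_mul_eq_mul_div, le_div_iff₀ hb]
      nlinarith
    calc ‖v‖ ^ 2 * Real.exp (-b * ‖v‖ ^ 2)
        ≤ (2 / b * Real.exp (b / 2 * ‖v‖ ^ 2)) * Real.exp (-b * ‖v‖ ^ 2) :=
          mul_le_mul_of_nonneg_right key (Real.exp_pos _).le
      _ = 2 / b * Real.exp (-(b / 2) * ‖v‖ ^ 2) := by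
          rw [mul_assoc, ← Real.exp_add]; ring_nf

lemma fderiv_apply_eq_inner {d : ℕ} (f : Euc d → ℝ) (x u : Euc d) :
    fderiv ℝ f x u = ⟪gradient f x, u⟫ := by
  rw [gradient]
  simp [InnerProductSpace.toDual_symm_apply]

lemma strong_convex_lower {d : ℕ} {κ : ℝ} {f : Euc d → ℝ} (hf : ContDiff ℝ 1 f)
    (hconv : ∀ x y, κ * ‖x - y‖ ^ 2 ≤ ⟪gradient f x - gradient f y, x - y⟫)
    {xs : Euc d} (hxs : gradient f xs = 0) (x : Euc d) :
    f xs + κ / 2 * ‖x - xs‖ ^ 2 ≤ f x := by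
  set u : Euc d := x - xs with hu
  set φ : ℝ → ℝ := fun t => f (xs + t • u) - κ / 2 * ‖u‖ ^ 2 * t ^ 2 with hφ
  have hc : ∀ t : ℝ, HasDerivAt (fun t : ℝ => xs + t • u) u t := by
    intro t
    simpa using ((hasDerivAt_id t).smul_const u).const_add xs
  have hder : ∀ t : ℝ, HasDerivAt φ
      (⟪gradient f (xs + t • u), u⟫ - κ * ‖u‖ ^ 2 * t) t := by
    intro t
    have h1 : HasDerivAt (fun t : ℝ => f (xs + t • u))
        (fderiv ℝ f (xs + t • u) u) t :=
      ((hf.differentiable one_ne_zero (xs + t • u)).hasFDerivAt).comp_hasDerivAt t (hc t)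
    rw [fderiv_apply_eq_inner] at h1
    have h2 : HasDerivAt (fun t : ℝ => κ / 2 * ‖u‖ ^ 2 * t ^ 2)
        (κ * ‖u‖ ^ 2 * t) t := by
      have := ((hasDerivAt_pow 2 t).const_mul (κ / 2 * ‖u‖ ^ 2))
      exact this.congr_deriv (by norm_num; ring)
    exact h1.sub h2
  have hmono : MonotoneOn φ (Set.Icc 0 1) := by
    apply monotoneOn_of_deriv_nonneg (convex_Icc 0 1)
    · exact (fun t _ => ((hder t).differentiableAt).continuousAt.continuousWithinAt)
    · exact fun t _ => ((hder t).differentiableAt).differentiableWithinAt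
    · intro t ht
      rw [interior_Icc] at ht
      rw [(hder t).deriv]
      have h3 := hconv (xs + t • u) xs
      rw [hxs, sub_zero, add_sub_cancel_left] at h3
      have ht0 : 0 < t := ht.1
      rw [norm_smul, real_inner_smul_right] at h3
      simp only [Real.norm_eq_abs, abs_of_pos ht0] at h3
      rw [mul_pow] at h3
      nlinarith
  have h01 := hmono (Set.mem_Icc.2 ⟨le_rfl, zero_le_one⟩)
    (Set.mem_Icc.2 ⟨zero_le_one, le_rfl⟩) zero_le_one
  simp only [hφ, zero_smul, add_zero, one_smul] at h01
  have hx : xs + u = x := by rw [hu]; abel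
  rw [hx] at h01
  nlinarith [h01]

lemma wd_integral {d : ℕ} {p : Euc d → ℝ} (hp : Continuous p) (hp0 : ∀ x, 0 ≤ p x)
    (u : Euc d → ℝ) :
    ∫ x, u x ∂(volume.withDensity fun x => ENNReal.ofReal (p x)) = ∫ x, p x * u x := by
  have hm : Measurable fun x => (p x).toNNReal := hp.measurable.real_toNNReal
  rw [show (fun x => ENNReal.ofReal (p x)) = (fun x => ((p x).toNNReal : ℝ≥0∞)) from rfl,
    integral_withDensity_eq_integral_smul hm u]
  congr 1; ext x
  simp [NNReal.smul_def, Real.coe_toNNReal _ (hp0 x)]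

lemma wd_integrable {d : ℕ} {p : Euc d → ℝ} (hp : Continuous p) (hp0 : ∀ x, 0 ≤ p x)
    (u : Euc d → ℝ) :
    Integrable u (volume.withDensity fun x => ENNReal.ofReal (p x)) ↔
      Integrable (fun x => p x * u x) volume := by
  have hm : Measurable fun x => (p x).toNNReal := hp.measurable.real_toNNReal
  rw [show (fun x => ENNReal.ofReal (p x)) = (fun x => ((p x).toNNReal : ℝ≥0∞)) from rfl,
    integrable_withDensity_iff_integrable_smul hm]
  constructor <;> intro h <;> refine h.congr (Filter.Eventually.of_forall fun x => ?_) <;>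
    simp [NNReal.smul_def, Real.coe_toNNReal _ (hp0 x)]

lemma grad_cexp {d : ℕ} {f f' : Euc d → ℝ} (hf : ContDiff ℝ 1 f) (hf' : ContDiff ℝ 1 f')
    (c A B : ℝ) (x : Euc d) :
    HasGradientAt (fun y => c * Real.exp (A * f' y - B * f y))
      ((c * Real.exp (A * f' x - B * f x)) • (A • gradient f' x - B • gradient f x)) x := by
  have Hf := (hf.differentiable one_ne_zero x).hasFDerivAt
  have Hf' := (hf'.differentiable one_ne_zero x).hasFDerivAt
  have Hh : HasFDerivAt (fun y => A * f' y - B * f y)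
      (A • fderiv ℝ f' x - B • fderiv ℝ f x) x := (Hf'.const_mul A).sub (Hf.const_mul B)
  have HG : HasFDerivAt (fun y => c * Real.exp (A * f' y - B * f y))
      (c • (Real.exp (A * f' x - B * f x) • (A • fderiv ℝ f' x - B • fderiv ℝ f x))) x :=
    (Hh.exp).const_mul c
  rw [hasGradientAt_iff_hasFDerivAt]
  refine HG.congr_fderiv ?_
  unfold gradient
  simp [smul_smul]

lemma arith_sq_bound {σ L M L' r D n : ℝ} (hσ : 0 < σ) (hn0 : 0 ≤ n)
    (hr0 : 0 ≤ r) (hD0 : 0 ≤ D) (hM0 : 0 ≤ M) (hL'0 : 0 ≤ L')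
    (hn' : 4 * σ ^ 2 * n ≤ L * r + M * L' * r + M * L' * D) :
    n ^ 2 ≤ 1 / (16 * σ ^ 4) *
      ((2 * L ^ 2 + 4 * M ^ 2 * L' ^ 2) * r ^ 2 + 4 * M ^ 2 * L' ^ 2 * D ^ 2) := by
  have h16 : (0:ℝ) < 16 * σ ^ 4 := by positivity
  rw [div_mul_eq_mul_div, le_div_iff₀ h16]
  have s0 : (0:ℝ) ≤ L * r + M * L' * r + M * L' * D :=
    le_trans (by positivity) hn'
  have e1 : (4 * σ ^ 2 * n) ^ 2 ≤ (L * r + M * L' * r + M * L' * D) ^ 2 := by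
    nlinarith [hn', mul_nonneg (by positivity : (0:ℝ) ≤ 4 * σ ^ 2) hn0]
  have e2 : (L * r + M * L' * r + M * L' * D) ^ 2
      ≤ 2 * (L * r) ^ 2 + 4 * (M * L' * r) ^ 2 + 4 * (M * L' * D) ^ 2 := by
    nlinarith [sq_nonneg (L * r - M * L' * r - M * L' * D),
      sq_nonneg (M * L' * r - M * L' * D)]
  nlinarith [e1, e2]

set_option maxHeartbeats 1000000

/-- Stationary (Gibbs-to-Gibbs) relative entropy bound. -/
theorem kl_gibbs_stationary_bound {d : ℕ}
    (σ σ' κ κ' L L' : ℝ)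
    (hσ : 0 < σ) (hσ' : 0 < σ') (hκ : 0 < κ) (hκ' : 0 < κ')
    (hL : 0 < L) (hL' : 0 < L')
    (f f' : Euc d → ℝ) (hf : ContDiff ℝ 1 f) (hf' : ContDiff ℝ 1 f')
    (hfLip : ∀ x y, ‖gradient f x - gradient f y‖ ≤ L * ‖x - y‖)
    (hf'Lip : ∀ x y, ‖gradient f' x - gradient f' y‖ ≤ L' * ‖x - y‖)
    (hfconv : ∀ x y, κ * ‖x - y‖ ^ 2 ≤ ⟪gradient f x - gradient f y, x - y⟫)
    (hf'conv : ∀ x y, κ' * ‖x - y‖ ^ 2 ≤ ⟪gradient f' x - gradient f' y, x - y⟫)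
    (xs xs' : Euc d) (hxs : gradient f xs = 0) (hxs' : gradient f' xs' = 0)
    (hfint : Integrable (fun x => Real.exp (-f x / (2 * σ ^ 2))) volume)
    (hf'int : Integrable (fun x => Real.exp (-f' x / (2 * σ' ^ 2))) volume)
    (pinf pinf' : Euc d → ℝ)
    (hpinf : ∀ x, pinf x =
      Real.exp (-f x / (2 * σ ^ 2)) / ∫ y, Real.exp (-f y / (2 * σ ^ 2)))
    (hpinf' : ∀ x, pinf' x =
      Real.exp (-f' x / (2 * σ' ^ 2)) / ∫ y, Real.exp (-f' y / (2 * σ' ^ 2)))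
    -- (a) the LSI for `p'_∞ dx` with constant `4/(σ'²κ')`
    (hLSI : SatisfiesLSI (volume.withDensity fun x => ENNReal.ofReal (pinf' x))
      (4 / (σ' ^ 2 * κ')))
    -- (b) the second-moment bound for `p_∞`
    (hmom : ∫ x, ‖x - xs‖ ^ 2 * pinf x ≤ σ ^ 2 / (2 * κ))
    -- (c) regularity / integrability
    (hgrad : Integrable
      (fun x => ‖gradient (fun y => Real.sqrt (pinf y / pinf' y)) x‖ ^ 2)
      (volume.withDensity fun x => ENNReal.ofReal (pinf' x)))
    (hklint : Integrable (fun x => pinf x * Real.log (pinf x / pinf' x)) volume) :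
    KLdiv pinf pinf' ≤
      (1 / (4 * σ ^ 4 * σ' ^ 2 * κ')) *
        ((L ^ 2 + 2 * (σ ^ 2 / σ' ^ 2) ^ 2 * L' ^ 2) * (σ ^ 2 / κ)
          + 4 * (σ ^ 2 / σ' ^ 2) ^ 2 * L' ^ 2 * ‖xs - xs'‖ ^ 2) := by
  have hσ2 : (0:ℝ) < σ ^ 2 := by positivity
  have hσ'2 : (0:ℝ) < σ' ^ 2 := by positivity
  set Z : ℝ := ∫ y, Real.exp (-f y / (2 * σ ^ 2)) with hZdef
  set Z' : ℝ := ∫ y, Real.exp (-f' y / (2 * σ' ^ 2)) with hZ'def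
  have hZ : 0 < Z := integral_exp_pos hfint
  have hZ' : 0 < Z' := integral_exp_pos hf'int
  -- positivity and continuity of the densities
  have hp : ∀ x, 0 < pinf x := fun x => by
    rw [hpinf x]; exact div_pos (Real.exp_pos _) hZ
  have hp' : ∀ x, 0 < pinf' x := fun x => by
    rw [hpinf' x]; exact div_pos (Real.exp_pos _) hZ'
  have hpc : Continuous pinf :=
    Continuous.congr (((hf.continuous.neg.div_const _).rexp).div_const _)
      (fun x => (hpinf x).symm)
  have hp'c : Continuous pinf' :=
    Continuous.congr (((hf'.continuous.neg.div_const _).rexp).div_const _)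
      (fun x => (hpinf' x).symm)
  have hpinf_int : Integrable pinf volume :=
    (hfint.div_const Z).congr (Filter.Eventually.of_forall fun x => (hpinf x).symm)
  have hpinf_one : ∫ x, pinf x = 1 := by
    have : ∫ x, pinf x = ∫ x, Real.exp (-f x / (2 * σ ^ 2)) / Z := by
      congr 1; funext x; exact hpinf x
    rw [this, integral_div, ← hZdef, div_self hZ.ne']
  -- the function G = sqrt(pinf/pinf') and its exponential form
  set G : Euc d → ℝ := fun y => Real.sqrt (pinf y / pinf' y) with hGdef
  set A : ℝ := 1 / (4 * σ' ^ 2) with hAdef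
  set B : ℝ := 1 / (4 * σ ^ 2) with hBdef
  set c : ℝ := Real.sqrt (Z' / Z) with hcdef
  have hc : 0 < c := Real.sqrt_pos.2 (div_pos hZ' hZ)
  have hGeq : ∀ y, G y = c * Real.exp (A * f' y - B * f y) := by
    intro y
    have e1 : Real.exp (-f y / (2 * σ ^ 2)) =
        Real.exp ((A * f' y - B * f y) + (A * f' y - B * f y))
          * Real.exp (-f' y / (2 * σ' ^ 2)) := by
      rw [← Real.exp_add]
      congr 1
      rw [hAdef, hBdef]
      field_simp
      ring
    have hratio : pinf y / pinf' y =
        (Z' / Z) * Real.exp ((A * f' y - B * f y) + (A * f' y - B * f y)) := by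
      rw [hpinf y, hpinf' y, e1]
      field_simp
    show Real.sqrt (pinf y / pinf' y) = _
    rw [hratio, Real.exp_add, Real.sqrt_mul (by positivity : (0:ℝ) ≤ Z' / Z),
      Real.sqrt_mul_self (Real.exp_pos _).le, ← hcdef]
  have hGfun : G = fun y => c * Real.exp (A * f' y - B * f y) := funext hGeq
  have hGpos : ∀ y, 0 < G y := fun y => by
    rw [hGeq y]; positivity
  have hGsq : ∀ y, G y ^ 2 = pinf y / pinf' y := fun y =>
    Real.sq_sqrt (div_nonneg (hp y).le (hp' y).le)
  have hGc : ContDiff ℝ 1 G := by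
    rw [hGfun]
    exact contDiff_const.mul (Real.contDiff_exp.comp
      ((contDiff_const.mul hf').sub (contDiff_const.mul hf)))
  -- gradient of G
  set v : Euc d → Euc d := fun x => A • gradient f' x - B • gradient f x with hvdef
  have hGgrad : ∀ x, gradient G x = G x • v x := by
    intro x
    have h := (grad_cexp hf hf' c A B x).gradient
    rw [← hGfun] at h
    rw [h, ← hGeq x]
  -- pointwise norms
  have hnormgrad : ∀ x, ‖gradient G x‖ ^ 2 = (pinf x / pinf' x) * ‖v x‖ ^ 2 := by
    intro x
    rw [hGgrad x, norm_smul, Real.norm_eq_abs, abs_of_pos (hGpos x), mul_pow, hGsq x]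
  set M : ℝ := σ ^ 2 / σ' ^ 2 with hMdef
  set D : ℝ := ‖xs - xs'‖ with hDdef
  have hD0 : 0 ≤ D := norm_nonneg _
  -- pointwise bound on ‖v x‖²
  have hvb : ∀ x, ‖v x‖ ^ 2 ≤ 1 / (16 * σ ^ 4) *
      ((2 * L ^ 2 + 4 * M ^ 2 * L' ^ 2) * ‖x - xs‖ ^ 2
        + 4 * M ^ 2 * L' ^ 2 * D ^ 2) := by
    intro x
    set r : ℝ := ‖x - xs‖ with hrdef
    have hr0 : 0 ≤ r := norm_nonneg _
    have hn0 : 0 ≤ ‖v x‖ := norm_nonneg _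
    have hfx : ‖gradient f x‖ ≤ L * r := by
      have := hfLip x xs
      rwa [hxs, sub_zero] at this
    have hf'x : ‖gradient f' x‖ ≤ L' * (r + D) := by
      have h1 := hf'Lip x xs'
      rw [hxs', sub_zero] at h1
      have h2 : ‖x - xs'‖ ≤ r + D := by
        have := norm_sub_le_norm_sub_add_norm_sub x xs xs'
        simpa [hrdef, hDdef] using this
      calc ‖gradient f' x‖ ≤ L' * ‖x - xs'‖ := h1
        _ ≤ L' * (r + D) := by nlinarith
    have hA0 : (0:ℝ) < A := by rw [hAdef]; positivity
    have hB0 : (0:ℝ) < B := by rw [hBdef]; positivity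
    have h1 : ‖v x‖ ≤ A * (L' * (r + D)) + B * (L * r) := by
      have h0 : ‖A • gradient f' x - B • gradient f x‖
          ≤ A * ‖gradient f' x‖ + B * ‖gradient f x‖ := by
        refine le_trans (norm_sub_le _ _) ?_
        rw [norm_smul, norm_smul, Real.norm_eq_abs, Real.norm_eq_abs,
          abs_of_pos hA0, abs_of_pos hB0]
      calc ‖v x‖ = ‖A • gradient f' x - B • gradient f x‖ := rfl
        _ ≤ A * ‖gradient f' x‖ + B * ‖gradient f x‖ := h0
        _ ≤ A * (L' * (r + D)) + B * (L * r) := by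
            have e1 := mul_le_mul_of_nonneg_left hf'x hA0.le
            have e2 := mul_le_mul_of_nonneg_left hfx hB0.le
            linarith
    have h2 : 4 * σ ^ 2 * (A * (L' * (r + D)) + B * (L * r))
        = L * r + M * L' * r + M * L' * D := by
      rw [hAdef, hBdef, hMdef]
      field_simp
      ring
    have hn' : 4 * σ ^ 2 * ‖v x‖ ≤ L * r + M * L' * r + M * L' * D := by
      have := mul_le_mul_of_nonneg_left h1 (show (0:ℝ) ≤ 4 * σ ^ 2 by positivity)
      linarith [this, h2.le, h2.ge]
    have hM0 : 0 ≤ M := by rw [hMdef]; positivity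
    exact arith_sq_bound hσ hn0 hr0 hD0 hM0 hL'.le hn'
  -- integrability of pinf * ‖x - xs‖²
  have hquad : ∀ x, f xs + κ / 2 * ‖x - xs‖ ^ 2 ≤ f x :=
    strong_convex_lower hf hfconv hxs
  set b : ℝ := κ / (4 * σ ^ 2) with hbdef
  have hb : 0 < b := by rw [hbdef]; positivity
  set K : ℝ := Real.exp (-f xs / (2 * σ ^ 2)) / Z with hKdef
  have hK : 0 < K := by rw [hKdef]; exact div_pos (Real.exp_pos _) hZ
  have hpbound : ∀ x, pinf x ≤ K * Real.exp (-b * ‖x - xs‖ ^ 2) := by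
    intro x
    have h1 : Real.exp (-f x / (2 * σ ^ 2))
        ≤ Real.exp (-f xs / (2 * σ ^ 2)) * Real.exp (-b * ‖x - xs‖ ^ 2) := by
      rw [← Real.exp_add]
      apply Real.exp_le_exp.2
      have hq : -f x ≤ -f xs - κ / 2 * ‖x - xs‖ ^ 2 := by linarith [hquad x]
      calc -f x / (2 * σ ^ 2)
          ≤ (-f xs - κ / 2 * ‖x - xs‖ ^ 2) / (2 * σ ^ 2) := by gcongr
        _ = -f xs / (2 * σ ^ 2) + -b * ‖x - xs‖ ^ 2 := by
            rw [hbdef]; field_simp; ring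
    rw [hpinf x, hKdef, div_mul_eq_mul_div]
    gcongr
  have hmom_int : Integrable (fun x => pinf x * ‖x - xs‖ ^ 2) volume := by
    have hbig : Integrable (fun x : Euc d =>
        K * (‖x - xs‖ ^ 2 * Real.exp (-b * ‖x - xs‖ ^ 2))) volume :=
      ((gauss_mom hb).comp_sub_right xs).const_mul K
    refine hbig.mono' ?_ (Filter.Eventually.of_forall fun x => ?_)
    · exact (hpc.mul ((continuous_id.sub continuous_const).norm.pow 2)).aestronglyMeasurable
    · rw [Real.norm_eq_abs, abs_of_nonneg (mul_nonneg (hp x).le (sq_nonneg _))]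
      have := mul_le_mul_of_nonneg_right (hpbound x) (sq_nonneg ‖x - xs‖)
      calc pinf x * ‖x - xs‖ ^ 2
          ≤ K * Real.exp (-b * ‖x - xs‖ ^ 2) * ‖x - xs‖ ^ 2 := this
        _ = K * (‖x - xs‖ ^ 2 * Real.exp (-b * ‖x - xs‖ ^ 2)) := by ring
  -- transfer the LSI data to Lebesgue integrals
  have hp'0 : ∀ x, 0 ≤ pinf' x := fun x => (hp' x).le
  have hptwise1 : ∀ x, pinf' x * G x ^ 2 = pinf x := by
    intro x
    rw [hGsq x, mul_div_cancel₀ _ (hp' x).ne']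
  have hI1 : Integrable (fun x => G x ^ 2)
      (volume.withDensity fun x => ENNReal.ofReal (pinf' x)) := by
    rw [wd_integrable hp'c hp'0]
    exact hpinf_int.congr (Filter.Eventually.of_forall fun x => (hptwise1 x).symm)
  have hptwise2 : ∀ x, pinf' x * (G x ^ 2 * Real.log (G x ^ 2))
      = pinf x * Real.log (pinf x / pinf' x) := by
    intro x
    rw [hGsq x, ← mul_assoc, mul_div_cancel₀ _ (hp' x).ne']
  have hI2 : Integrable (fun x => G x ^ 2 * Real.log (G x ^ 2))
      (volume.withDensity fun x => ENNReal.ofReal (pinf' x)) := by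
    rw [wd_integrable hp'c hp'0]
    exact hklint.congr (Filter.Eventually.of_forall fun x => (hptwise2 x).symm)
  have hlsi := hLSI G hGc hI1 hI2 hgrad
  -- compute the three integrals
  have E1 : ∫ x, G x ^ 2 ∂(volume.withDensity fun x => ENNReal.ofReal (pinf' x)) = 1 := by
    rw [wd_integral hp'c hp'0]
    rw [show (fun x => pinf' x * G x ^ 2) = pinf from funext hptwise1] at *
    · exact hpinf_one
  have E2 : (∫ x, G x ^ 2 * Real.log (G x ^ 2)
        ∂(volume.withDensity fun x => ENNReal.ofReal (pinf' x)))
      = KLdiv pinf pinf' := by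
    rw [wd_integral hp'c hp'0, KLdiv]
    congr 1; funext x; exact hptwise2 x
  have hptwise3 : ∀ x, pinf' x * ‖gradient G x‖ ^ 2 = pinf x * ‖v x‖ ^ 2 := by
    intro x
    rw [hnormgrad x, ← mul_assoc, mul_div_cancel₀ _ (hp' x).ne']
  have E3 : (∫ x, ‖gradient G x‖ ^ 2
        ∂(volume.withDensity fun x => ENNReal.ofReal (pinf' x)))
      = ∫ x, pinf x * ‖v x‖ ^ 2 := by
    rw [wd_integral hp'c hp'0]
    congr 1; funext x; exact hptwise3 x
  rw [E1, E2, E3, Real.log_one, mul_zero, sub_zero] at hlsi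
  -- integrability of pinf * ‖v‖²
  have hvint : Integrable (fun x => pinf x * ‖v x‖ ^ 2) volume := by
    have := (wd_integrable hp'c hp'0
      (fun x => ‖gradient G x‖ ^ 2)).1 hgrad
    exact this.congr (Filter.Eventually.of_forall fun x => hptwise3 x)
  -- the main integral bound
  set c1 : ℝ := 1 / (16 * σ ^ 4) * (2 * L ^ 2 + 4 * M ^ 2 * L' ^ 2) with hc1def
  set c2 : ℝ := 1 / (16 * σ ^ 4) * (4 * M ^ 2 * L' ^ 2 * D ^ 2) with hc2def
  have hc10 : 0 ≤ c1 := by rw [hc1def, hMdef]; positivity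
  have hc20 : 0 ≤ c2 := by rw [hc2def, hMdef]; positivity
  have hintR : Integrable (fun x => c1 * (pinf x * ‖x - xs‖ ^ 2) + c2 * pinf x) volume :=
    (hmom_int.const_mul c1).add (hpinf_int.const_mul c2)
  have hptle : ∀ x, pinf x * ‖v x‖ ^ 2
      ≤ c1 * (pinf x * ‖x - xs‖ ^ 2) + c2 * pinf x := by
    intro x
    have := mul_le_mul_of_nonneg_left (hvb x) (hp x).le
    calc pinf x * ‖v x‖ ^ 2
        ≤ pinf x * (1 / (16 * σ ^ 4) *
          ((2 * L ^ 2 + 4 * M ^ 2 * L' ^ 2) * ‖x - xs‖ ^ 2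
            + 4 * M ^ 2 * L' ^ 2 * D ^ 2)) := this
      _ = c1 * (pinf x * ‖x - xs‖ ^ 2) + c2 * pinf x := by
          rw [hc1def, hc2def]; ring
  have hT : ∫ x, pinf x * ‖v x‖ ^ 2
      ≤ c1 * (∫ x, pinf x * ‖x - xs‖ ^ 2) + c2 := by
    have h := integral_mono hvint hintR hptle
    rw [integral_add (hmom_int.const_mul c1) (hpinf_int.const_mul c2),
      integral_const_mul, integral_const_mul, hpinf_one, mul_one] at h
    exact h
  have hS : ∫ x, pinf x * ‖x - xs‖ ^ 2 ≤ σ ^ 2 / (2 * κ) := by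
    have : ∫ x, pinf x * ‖x - xs‖ ^ 2 = ∫ x, ‖x - xs‖ ^ 2 * pinf x := by
      congr 1; funext x; ring
    rw [this]; exact hmom
  have hC'0 : 0 ≤ 4 / (σ' ^ 2 * κ') := by positivity
  have hfinal : KLdiv pinf pinf'
      ≤ 4 / (σ' ^ 2 * κ') * (c1 * (σ ^ 2 / (2 * κ)) + c2) := by
    refine le_trans hlsi ?_
    have h3 := mul_le_mul_of_nonneg_left hS hc10
    have h4 : (∫ x, pinf x * ‖v x‖ ^ 2) ≤ c1 * (σ ^ 2 / (2 * κ)) + c2 := by linarith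
    exact mul_le_mul_of_nonneg_left h4 hC'0
  refine le_trans hfinal (le_of_eq ?_)
  rw [hc1def, hc2def, hMdef]
  field_simp
  ring

end
end

section
/- Let σ, σ' > 0 and let f, f' : ℝ^d → ℝ be continuously differentiable with e^{−f/(2σ²)} and e^{−f'/(2σ'²)} Lebesgue-integrable. Define p_∞ = Z^{−1} e^{−f/(2σ²)} and p'_∞ = (Z')^{−1} e^{−f'/(2σ'²)} with normalizing constants Z, Z'. Suppose the measure p'_∞(x)dx satisfies the C'-log-Sobolev inequality, g := √(p_∞/p'_∞) satisfies ∫ ‖∇g‖² p'_∞ dx < ∞, and p_∞ log(p_∞/p'_∞) is integrable. Then KL(p_∞‖p'_∞) ≤ (C'/(16 σ⁴)) ∫_{ℝ^d} p_∞(x) ‖∇f(x) − (σ²/σ'²) ∇f'(x)‖² dx. -/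
noncomputable section

open MeasureTheory
open scoped RealInnerProductSpace

/-- Intermediate estimate for Gibbs densities: under the `C'`-LSI for `p'_∞ dx`,
`KL(p_∞‖p'_∞) ≤ (C'/(16σ⁴)) ∫ p_∞ ‖∇f − (σ²/σ'²)∇f'‖²`. -/
theorem kl_gibbs_fisher_bound {d : ℕ}
    (σ σ' : ℝ) (hσ : 0 < σ) (hσ' : 0 < σ')
    (f f' : Euc d → ℝ) (hf : ContDiff ℝ 1 f) (hf' : ContDiff ℝ 1 f')
    (hfint : Integrable (fun x => Real.exp (-f x / (2 * σ ^ 2))) volume)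
    (hf'int : Integrable (fun x => Real.exp (-f' x / (2 * σ' ^ 2))) volume)
    (pinf pinf' : Euc d → ℝ)
    (hpinf : ∀ x, pinf x =
      Real.exp (-f x / (2 * σ ^ 2)) / ∫ y, Real.exp (-f y / (2 * σ ^ 2)))
    (hpinf' : ∀ x, pinf' x =
      Real.exp (-f' x / (2 * σ' ^ 2)) / ∫ y, Real.exp (-f' y / (2 * σ' ^ 2)))
    (C' : ℝ) (hC' : 0 < C')
    (hLSI : SatisfiesLSI (volume.withDensity fun x => ENNReal.ofReal (pinf' x)) C')
    (hgrad : Integrable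
      (fun x => ‖gradient (fun y => Real.sqrt (pinf y / pinf' y)) x‖ ^ 2)
      (volume.withDensity fun x => ENNReal.ofReal (pinf' x)))
    (hklint : Integrable (fun x => pinf x * Real.log (pinf x / pinf' x)) volume) :
    KLdiv pinf pinf' ≤
      (C' / (16 * σ ^ 4)) *
        ∫ x, pinf x * ‖gradient f x - (σ ^ 2 / σ' ^ 2) • gradient f' x‖ ^ 2 := by

  -- replace pinf, pinf' by their explicit formulas
  have hpe : pinf = fun x =>
      Real.exp (-f x / (2 * σ ^ 2)) / ∫ y, Real.exp (-f y / (2 * σ ^ 2)) := funext hpinf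
  have hpe' : pinf' = fun x =>
      Real.exp (-f' x / (2 * σ' ^ 2)) / ∫ y, Real.exp (-f' y / (2 * σ' ^ 2)) := funext hpinf'
  subst hpe hpe'
  set Z : ℝ := ∫ y, Real.exp (-f y / (2 * σ ^ 2)) with hZdef
  set Z' : ℝ := ∫ y, Real.exp (-f' y / (2 * σ' ^ 2)) with hZ'def
  set p : Euc d → ℝ := fun x => Real.exp (-f x / (2 * σ ^ 2)) / Z with hpdef
  set p' : Euc d → ℝ := fun x => Real.exp (-f' x / (2 * σ' ^ 2)) / Z' with hp'def
  have hσ0 : (σ : ℝ) ≠ 0 := hσ.ne'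
  have hσ'0 : (σ' : ℝ) ≠ 0 := hσ'.ne'
  have hZ : 0 < Z := by
    rw [hZdef]
    rw [integral_pos_iff_support_of_nonneg (fun x => (Real.exp_pos _).le) hfint]
    have : Function.support (fun x : Euc d => Real.exp (-f x / (2 * σ ^ 2))) = Set.univ := by
      ext x; simp [(Real.exp_pos _).ne']
    rw [this]
    exact isOpen_univ.measure_pos volume Set.univ_nonempty
  have hZ' : 0 < Z' := by
    rw [hZ'def]
    rw [integral_pos_iff_support_of_nonneg (fun x => (Real.exp_pos _).le) hf'int]
    have : Function.support (fun x : Euc d => Real.exp (-f' x / (2 * σ' ^ 2))) = Set.univ := by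
      ext x; simp [(Real.exp_pos _).ne']
    rw [this]
    exact isOpen_univ.measure_pos volume Set.univ_nonempty
  have hppos : ∀ x, 0 < p x := fun x => div_pos (Real.exp_pos _) hZ
  have hp'pos : ∀ x, 0 < p' x := fun x => div_pos (Real.exp_pos _) hZ'
  set c : ℝ := Real.sqrt (Z' / Z) with hcdef
  set v : Euc d → ℝ := fun x => (4 * σ' ^ 2)⁻¹ * f' x - (4 * σ ^ 2)⁻¹ * f x with hvdef
  set G : Euc d → ℝ := fun x => c * Real.exp (v x) with hGdef
  -- the function from the hypothesis equals G
  have hratio : ∀ x, p x / p' x = (Z' / Z) *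
      Real.exp (-f x / (2 * σ ^ 2) - -f' x / (2 * σ' ^ 2)) := by
    intro x
    rw [hpdef, hp'def, Real.exp_sub]
    field_simp
  have hgG : (fun y => Real.sqrt (p y / p' y)) = G := by
    funext x
    rw [hratio x, Real.sqrt_mul (by positivity), ← Real.exp_half, hGdef, hcdef]
    congr 1
    rw [hvdef]
    field_simp
    ring
  have hGpos : ∀ x, 0 < G x := fun x =>
    mul_pos (Real.sqrt_pos.2 (div_pos hZ' hZ)) (Real.exp_pos _)
  have hGsq : ∀ x, G x ^ 2 = p x / p' x := by
    intro x
    rw [← hgG]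
    exact Real.sq_sqrt (le_of_lt (div_pos (hppos x) (hp'pos x)))
  have hkey : ∀ x, p' x * G x ^ 2 = p x := by
    intro x
    rw [hGsq x, mul_comm, div_mul_cancel₀ _ (hp'pos x).ne']
  have hkey2 : ∀ x, p' x * (G x ^ 2 * Real.log (G x ^ 2)) = p x * Real.log (p x / p' x) := by
    intro x
    rw [← mul_assoc, hkey x, hGsq x]
  -- gradient computation
  set w : Euc d → Euc d := fun x => gradient f x - (σ ^ 2 / σ' ^ 2) • gradient f' x with hwdef
  have key : ∀ x, HasGradientAt G ((-(G x) / (4 * σ ^ 2)) • w x) x := by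
    intro x
    have Hf : HasFDerivAt f ((InnerProductSpace.toDual ℝ (Euc d)) (gradient f x)) x :=
      ((hf.differentiable one_ne_zero) x).hasGradientAt.hasFDerivAt
    have Hf' : HasFDerivAt f' ((InnerProductSpace.toDual ℝ (Euc d)) (gradient f' x)) x :=
      ((hf'.differentiable one_ne_zero) x).hasGradientAt.hasFDerivAt
    have Hv : HasFDerivAt v
        ((4 * σ' ^ 2)⁻¹ • (InnerProductSpace.toDual ℝ (Euc d)) (gradient f' x)
          - (4 * σ ^ 2)⁻¹ • (InnerProductSpace.toDual ℝ (Euc d)) (gradient f x)) x :=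
      (Hf'.const_mul _).sub (Hf.const_mul _)
    have HG : HasFDerivAt G
        (c • (Real.exp (v x) •
          ((4 * σ' ^ 2)⁻¹ • (InnerProductSpace.toDual ℝ (Euc d)) (gradient f' x)
            - (4 * σ ^ 2)⁻¹ • (InnerProductSpace.toDual ℝ (Euc d)) (gradient f x)))) x :=
      (Hv.exp).const_mul c
    rw [hasGradientAt_iff_hasFDerivAt]
    refine HG.congr_fderiv ?_
    have hw : (InnerProductSpace.toDual ℝ (Euc d)) ((-(G x) / (4 * σ ^ 2)) • w x)
        = (-(G x) / (4 * σ ^ 2)) • ((InnerProductSpace.toDual ℝ (Euc d)) (gradient f x)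
            - (σ ^ 2 / σ' ^ 2) • (InnerProductSpace.toDual ℝ (Euc d)) (gradient f' x)) := by
      rw [hwdef]
      simp
    rw [hw]
    simp only [hGdef]
    match_scalars
    all_goals field_simp
    all_goals ring
  have hgradG : ∀ x, gradient G x = (-(G x) / (4 * σ ^ 2)) • w x := fun x => (key x).gradient
  have hnorm : ∀ x, p' x * ‖gradient G x‖ ^ 2 = (16 * σ ^ 4)⁻¹ * (p x * ‖w x‖ ^ 2) := by
    intro x
    rw [hgradG x, norm_smul, mul_pow, Real.norm_eq_abs, sq_abs]
    have h1 : (-(G x) / (4 * σ ^ 2)) ^ 2 = G x ^ 2 * (16 * σ ^ 4)⁻¹ := by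
      field_simp
      ring
    rw [h1]
    have h2 : p' x * (G x ^ 2 * (16 * σ ^ 4)⁻¹ * ‖w x‖ ^ 2)
        = (p' x * G x ^ 2) * ((16 * σ ^ 4)⁻¹ * ‖w x‖ ^ 2) := by ring
    rw [h2, hkey x]
    ring
  -- measure-theoretic conversions
  set ν : Measure (Euc d) := volume.withDensity fun x => ENNReal.ofReal (p' x) with hνdef
  have hcont' : Continuous p' := by
    rw [hp'def]
    exact ((hf'.continuous.neg.div_const _).rexp).div_const _
  have hmeas : Measurable fun x => (p' x).toNNReal := hcont'.measurable.real_toNNReal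
  have hdens : (fun x => ENNReal.ofReal (p' x))
      = fun x => (((p' x).toNNReal : NNReal) : ENNReal) := rfl
  have hInt : ∀ h : Euc d → ℝ, ∫ x, h x ∂ν = ∫ x, p' x * h x := by
    intro h
    rw [hνdef, hdens, integral_withDensity_eq_integral_smul hmeas]
    congr 1
    funext x
    simp [NNReal.smul_def, Real.coe_toNNReal _ (hp'pos x).le]
  have hIntgr : ∀ h : Euc d → ℝ, Integrable h ν ↔ Integrable (fun x => p' x * h x) volume := by
    intro h
    rw [hνdef, hdens, integrable_withDensity_iff_integrable_smul hmeas]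
    constructor <;> intro hh <;> refine hh.congr (Filter.Eventually.of_forall fun x => ?_) <;>
      simp [NNReal.smul_def, Real.coe_toNNReal _ (hp'pos x).le]
  -- side conditions for the LSI
  have hcontG : ContDiff ℝ 1 G := by
    rw [hGdef]
    exact contDiff_const.mul (((contDiff_const.mul hf').sub (contDiff_const.mul hf)).exp)
  have hpint : Integrable p volume := by
    rw [hpdef]
    exact hfint.div_const Z
  have hIntV : Integrable (fun x => G x ^ 2) ν := by
    rw [hIntgr]
    exact hpint.congr (Filter.Eventually.of_forall fun x => (hkey x).symm)
  have hIntVL : Integrable (fun x => G x ^ 2 * Real.log (G x ^ 2)) ν := by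
    rw [hIntgr]
    exact hklint.congr (Filter.Eventually.of_forall fun x => (hkey2 x).symm)
  have hgrad' : Integrable (fun x => ‖gradient G x‖ ^ 2) ν := by
    rw [hgG] at hgrad
    exact hgrad
  have main := hLSI G hcontG hIntV hIntVL hgrad'
  -- compute each integral
  have hInt1 : ∫ x, G x ^ 2 ∂ν = 1 := by
    rw [hInt]
    simp only [hkey]
    rw [hpdef]
    rw [integral_div, ← hZdef]
    exact div_self hZ.ne'
  have hIntKL : ∫ x, G x ^ 2 * Real.log (G x ^ 2) ∂ν = KLdiv p p' := by
    rw [hInt, KLdiv]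
    congr 1
    funext x
    exact hkey2 x
  have hIntRHS : ∫ x, ‖gradient G x‖ ^ 2 ∂ν
      = (16 * σ ^ 4)⁻¹ * ∫ x, p x * ‖w x‖ ^ 2 := by
    rw [hInt, ← integral_const_mul]
    congr 1
    funext x
    exact hnorm x
  rw [hInt1, hIntKL, hIntRHS, Real.log_one, mul_zero, sub_zero] at main
  calc KLdiv p p' ≤ C' * ((16 * σ ^ 4)⁻¹ * ∫ x, p x * ‖w x‖ ^ 2) := main
    _ = (C' / (16 * σ ^ 4)) * ∫ x, p x * ‖w x‖ ^ 2 := by ring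

end
end

section
/- Let A be an invertible symmetric n×n real matrix and let S be an n×n real matrix with A * S = S * A. Then for every t ≥ 0, ∫_0^t exp(−(t−s) • A) * S * exp(−(t−s) • Aᵀ) ds = (1/2) * A⁻¹ * (1 − exp(−2t • A)) * S, where exp is the matrix exponential, 1 the identity matrix, and the integral is the entrywise integral over [0,t]. -/
/-!
Because `A` is symmetric and commutes with `S`, the integrand collapses to `e^{(2s - 2t)A} S`.
After the substitution `u = 2s - 2t`, the integral `∫ e^{uA} du` is computed by the fundamental
theorem of calculus with antiderivative `A⁻¹ e^{uA}`. The entrywise integral is the image of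
the matrix-valued integral under the continuous linear map `M ↦ (M S) i j`.
-/

noncomputable section

open MeasureTheory Matrix NormedSpace

section BanachAlgebra

variable {𝔸 : Type*} [NormedRing 𝔸] [NormedAlgebra ℝ 𝔸] [CompleteSpace 𝔸]

theorem exp_smul_mul_mul_exp_smul_of_commute [NormedAlgebra ℚ 𝔸] {a b : 𝔸} (h : Commute a b)
    (u : ℝ) : exp (u • a) * b * exp (u • a) = exp ((2 * u) • a) * b := by
  rw [mul_assoc, ← ((h.smul_left u).exp_left).eq, ← mul_assoc,
    ← exp_add_of_commute (Commute.refl (u • a)), ← add_smul, two_mul]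

theorem integral_exp_smul_of_mul_eq_one {a a' : 𝔸} (h : a' * a = 1) (x y : ℝ) :
    ∫ u in x..y, exp (u • a) = a' * (exp (y • a) - exp (x • a)) := by
  have hderiv (u : ℝ) : HasDerivAt (fun v : ℝ => a' * exp (v • a)) (exp (u • a)) u := by
    simpa only [← mul_assoc, h, one_mul] using (hasDerivAt_exp_smul_const' a u).const_mul a'
  rw [mul_sub]
  exact intervalIntegral.integral_eq_sub_of_hasDerivAt (fun u _ => hderiv u)
    ((differentiable_exp_smul_const ℝ a).continuous.intervalIntegrable x y)

end BanachAlgebra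

-- The lemmas above see matrices through the normed instances of this scope, which agree with
-- the plain matrix instances of the statement only up to unfolding: hence `exact`, not `rw`.
open scoped Matrix.Norms.Operator in
/-- Covariance integral for the Ornstein–Uhlenbeck process: for `A` invertible symmetric
commuting with `S`,
`∫_0^t e^{−(t−s)A} S e^{−(t−s)Aᵀ} ds = (1/2) A⁻¹ (1 − e^{−2tA}) S` (entrywise). -/
theorem integral_ou_covariance {n : ℕ} (A : Matrix (Fin n) (Fin n) ℝ)
    (hA : IsUnit A.det) (hAsymm : A.IsSymm)
    (S : Matrix (Fin n) (Fin n) ℝ) (hcomm : A * S = S * A) :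
    ∀ t : ℝ, 0 ≤ t → ∀ i j : Fin n,
      ∫ s in (0:ℝ)..t,
          (exp ((-(t - s)) • A) * S * exp ((-(t - s)) • Aᵀ)) i j
        = ((1 / 2 : ℝ) • (A⁻¹ * (1 - exp ((-(2 * t)) • A)) * S)) i j := by
  intro t _ i j
  let L : Matrix (Fin n) (Fin n) ℝ →L[ℝ] ℝ :=
    LinearMap.toContinuousLinearMap (entryLinearMap ℝ ℝ i j ∘ₗ LinearMap.mulRight ℝ S)
  have hL (M : Matrix (Fin n) (Fin n) ℝ) : L M = (M * S) i j := rfl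
  have hintegrand (s : ℝ) : exp ((-(t - s)) • A) * S * exp ((-(t - s)) • Aᵀ) =
      exp ((2 * s - 2 * t) • A) * S := by
    rw [hAsymm.eq, show 2 * s - 2 * t = 2 * -(t - s) by ring]
    exact exp_smul_mul_mul_exp_smul_of_commute hcomm _
  have hexp : ∫ u in -(2 * t)..0, exp (u • A) = A⁻¹ * (1 - exp ((-(2 * t)) • A)) := by
    have h := integral_exp_smul_of_mul_eq_one (nonsing_inv_mul A hA) (-(2 * t)) 0
    rwa [zero_smul, exp_zero] at h
  calc ∫ s in (0:ℝ)..t, (exp ((-(t - s)) • A) * S * exp ((-(t - s)) • Aᵀ)) i j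
      = ∫ s in (0:ℝ)..t, L (exp ((2 * s - 2 * t) • A)) := by
        simp only [hintegrand, hL]
    _ = L (∫ s in (0:ℝ)..t, exp ((2 * s - 2 * t) • A)) :=
        L.intervalIntegral_comp_comm ((by fun_prop : Continuous _).intervalIntegrable 0 t)
    _ = L ((1 / 2 : ℝ) • (A⁻¹ * (1 - exp ((-(2 * t)) • A)))) := by
        rw [intervalIntegral.integral_comp_mul_sub (fun u => exp (u • A)) two_ne_zero,
          mul_zero, zero_sub, sub_self, hexp, one_div]
    _ = ((1 / 2 : ℝ) • (A⁻¹ * (1 - exp ((-(2 * t)) • A)) * S)) i j := by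
        rw [hL, smul_mul_assoc]

end
end
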